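/- Let n ≥ 1 and λ_0,...,λ_n > 0, and let A(λ) be the associated (n+2)×(n+2) Jacobi matrix. Suppose σ > 0 and ζ ∈ ℝ^{n+2} has all entries positive with A(λ)ζ = σζ. Define e_i := λ_i^{−1/2} σ^{−1} ζ_{i+2}/ζ_{i+1} for i = 1,...,n. Then e ∈ (0,1)^n, e satisfies the RFM steady-state equations λ_0(1−e_1) = λ_1 e_1(1−e_2) = ⋯ = λ_{n−1} e_{n−1}(1−e_n) = λ_n e_n, and the steady-state production rate satisfies λ_n e_n = σ^{−2}. -/

import Mathlib

open scoped BigOperators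

/-- Extended occupancy vector of an RFM chain with `N + 1` sites:
the input value `u` at the left boundary, the state in the middle,
and `0` at the right boundary. -/
noncomputable def rfmExt {N : ℕ} (u : ℝ) (x : Fin (N + 1) → ℝ) : Fin (N + 3) → ℝ :=
  Fin.cons u (Fin.snoc x 0)

/-- The flow into site `j` (so `j = 0` is the entry flow `λ₀ u (1 - x₁)`,
`j` internal is `λ_j x_j (1 - x_{j+1})` in 1-based notation,
and `j = N + 1` is the exit flow `λ_n x_n`). -/
noncomputable def rfmFlow {N : ℕ} (lam : Fin (N + 2) → ℝ) (u : ℝ)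
    (x : Fin (N + 1) → ℝ) (j : Fin (N + 2)) : ℝ :=
  lam j * rfmExt u x j.castSucc * (1 - rfmExt u x j.succ)

/-- The vector field of a single RFMIO chain with input `u`. -/
noncomputable def rfmVF {N : ℕ} (lam : Fin (N + 2) → ℝ) (u : ℝ)
    (x : Fin (N + 1) → ℝ) (j : Fin (N + 1)) : ℝ :=
  rfmFlow lam u x j.castSucc - rfmFlow lam u x j.succ

/-- The steady-state equations of an RFM chain with input `u`: all flows are equal,
i.e. `λ₀ u (1-e₁) = λ₁ e₁ (1-e₂) = ⋯ = λ_n e_n`. -/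
def rfmSS {N : ℕ} (lam : Fin (N + 2) → ℝ) (u : ℝ) (e : Fin (N + 1) → ℝ) : Prop :=
  ∀ j : Fin (N + 1), rfmFlow lam u e j.castSucc = rfmFlow lam u e j.succ

/-- The off-diagonal entry `λ_j^{-1/2}` of the Jacobi matrix (0-based rate index),
defined for all natural `j` for convenience. -/
noncomputable def jacobiEntry {N : ℕ} (lam : Fin (N + 2) → ℝ) (j : ℕ) : ℝ :=
  if h : j < N + 2 then (Real.sqrt (lam ⟨j, h⟩))⁻¹ else 0

/-- The `(n+2) × (n+2)` symmetric tridiagonal Jacobi matrix associated with an RFM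
with `n = N + 1` sites and rates `λ₀, …, λ_n`: zero diagonal and off-diagonal entries
`A_{i,i+1} = A_{i+1,i} = λ_{i-1}^{-1/2}` (1-based indexing). -/
noncomputable def jacobiMat {N : ℕ} (lam : Fin (N + 2) → ℝ) :
    Matrix (Fin (N + 3)) (Fin (N + 3)) ℝ :=
  fun p q =>
    if (p : ℕ) + 1 = (q : ℕ) then jacobiEntry lam p
    else if (q : ℕ) + 1 = (p : ℕ) then jacobiEntry lam q
    else 0

/-! With `a_k = λ_k^{-1/2}` and `ζ` extended by zero, put `x_k = a_k ζ_{k+1} / (σ ζ_k)`, so that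
`x_0 = 1`, `x_{j+1} = e_j` and `x_{n+1} = 0`. Row `0` of `A ζ = σ ζ` says `x_0 = 1`, and row
`k + 1` says `1 - x_{k+1} = a_k ζ_k / (σ ζ_{k+1})`. Hence `x_k (1 - x_{k+1}) = a_k² / σ²`, i.e.
every flow `λ_k x_k (1 - x_{k+1})` equals `σ⁻²`, and positivity of `ζ` gives `0 < x_k < 1`. -/

open Finset Function Matrix

section JacobiRatio

variable (a : ℕ → ℝ) (σ : ℝ) (z : ℕ → ℝ)

noncomputable def jacobiRatio (k : ℕ) : ℝ :=
  a k * z (k + 1) / (σ * z k)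

variable {a σ z}

lemma jacobiRatio_zero (hσ : σ ≠ 0) (hz : z 0 ≠ 0) (hrow : a 0 * z 1 = σ * z 0) :
    jacobiRatio a σ z 0 = 1 := by
  rw [jacobiRatio, hrow, div_self (mul_ne_zero hσ hz)]

lemma one_sub_jacobiRatio_succ {k : ℕ} (hσ : σ ≠ 0) (hz : z (k + 1) ≠ 0)
    (hrow : a (k + 1) * z (k + 2) + a k * z k = σ * z (k + 1)) :
    1 - jacobiRatio a σ z (k + 1) = a k * z k / (σ * z (k + 1)) := by
  rw [jacobiRatio, sub_eq_iff_eq_add, ← add_div, add_comm, eq_div_iff (mul_ne_zero hσ hz), one_mul]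
  exact hrow.symm

lemma jacobiRatio_mul_one_sub_succ {k : ℕ} (hσ : σ ≠ 0) (hzk : z k ≠ 0) (hz : z (k + 1) ≠ 0)
    (hrow : a (k + 1) * z (k + 2) + a k * z k = σ * z (k + 1)) :
    jacobiRatio a σ z k * (1 - jacobiRatio a σ z (k + 1)) = a k ^ 2 / σ ^ 2 := by
  rw [one_sub_jacobiRatio_succ hσ hz hrow, jacobiRatio]
  field_simp

end JacobiRatio

lemma extend_val_of_lt {α : Type*} [Zero α] {n : ℕ} (v : Fin n → α) {k : ℕ} (hk : k < n) :
    extend Fin.val v 0 k = v ⟨k, hk⟩ :=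
  Fin.val_injective.extend_apply v 0 ⟨k, hk⟩

lemma extend_val_eq_zero {α : Type*} [Zero α] {n : ℕ} (v : Fin n → α) {k : ℕ} (hk : n ≤ k) :
    extend Fin.val v 0 k = 0 :=
  extend_apply' _ _ _ (by rintro ⟨i, rfl⟩; omega)

section JacobiMatrix

variable {N : ℕ} (lam : Fin (N + 2) → ℝ)

lemma jacobiEntry_of_le {j : ℕ} (hj : N + 2 ≤ j) : jacobiEntry lam j = 0 :=
  dif_neg (by omega)

lemma jacobiEntry_val (j : Fin (N + 2)) : jacobiEntry lam j = (Real.sqrt (lam j))⁻¹ :=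
  dif_pos j.isLt

lemma jacobiEntry_pos {j : Fin (N + 2)} (hj : 0 < lam j) : 0 < jacobiEntry lam j := by
  rw [jacobiEntry_val]
  positivity

lemma mul_jacobiEntry_sq {j : Fin (N + 2)} (hj : 0 < lam j) :
    lam j * jacobiEntry lam j ^ 2 = 1 := by
  rw [jacobiEntry_val, inv_pow, Real.sq_sqrt hj.le, mul_inv_cancel₀ hj.ne']

variable (ζ : Fin (N + 3) → ℝ)

lemma jacobiMat_mulVec_eq_sum_range (p : Fin (N + 3)) :
    (jacobiMat lam *ᵥ ζ) p = ∑ q ∈ range (N + 3),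
      (if (p : ℕ) + 1 = q then jacobiEntry lam p else if q + 1 = p then jacobiEntry lam q else 0)
        * extend Fin.val ζ 0 q := by
  rw [Finset.sum_range]
  simp only [Fin.val_injective.extend_apply]
  rfl

lemma jacobiMat_mulVec_zero :
    (jacobiMat lam *ᵥ ζ) 0 = jacobiEntry lam 0 * extend Fin.val ζ 0 1 := by
  rw [jacobiMat_mulVec_eq_sum_range, sum_eq_single 1]
  · simp
  · intro q _ hq
    rw [if_neg (by simpa [eq_comm] using hq), if_neg (by simp), zero_mul]
  · simp

lemma jacobiMat_mulVec_succ (p : Fin (N + 2)) :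
    (jacobiMat lam *ᵥ ζ) p.succ = jacobiEntry lam (p + 1) * extend Fin.val ζ 0 (p + 2) +
      jacobiEntry lam p * extend Fin.val ζ 0 p := by
  rw [jacobiMat_mulVec_eq_sum_range, sum_eq_add ((p : ℕ) + 2) p (by omega)]
  all_goals simp only [Fin.val_succ]
  · simp only [↓reduceIte]
    rw [if_neg (by omega)]
  · intro q _ hq
    rw [if_neg (by omega), if_neg (by omega), zero_mul]
  · intro hp
    rw [extend_val_eq_zero ζ (by simpa using hp), mul_zero]
  · intro hp
    exact absurd (mem_range.mpr (by omega)) hp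

end JacobiMatrix

section RFM

variable {N : ℕ} (lam : Fin (N + 2) → ℝ) (u : ℝ) (x : Fin (N + 1) → ℝ)

@[simp] lemma rfmExt_zero : rfmExt u x 0 = u := rfl

@[simp] lemma rfmExt_succ_castSucc (j : Fin (N + 1)) : rfmExt u x j.castSucc.succ = x j := by
  simp [rfmExt]

@[simp] lemma rfmExt_last : rfmExt u x (Fin.last (N + 2)) = 0 := by
  rw [rfmExt, ← Fin.succ_last, Fin.cons_succ, Fin.snoc_last]

lemma rfmFlow_last :
    rfmFlow lam u x (Fin.last (N + 1)) = lam (Fin.last (N + 1)) * x (Fin.last N) := by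
  rw [rfmFlow, Fin.succ_last, rfmExt_last, ← Fin.succ_last N, Fin.castSucc_succ,
    rfmExt_succ_castSucc, sub_zero, mul_one]

end RFM

section SpectralSteadyState

variable {N : ℕ} {lam : Fin (N + 2) → ℝ} {σ : ℝ} {ζ : Fin (N + 3) → ℝ}

-- `ζ` extended by zero: `z (N + 3) = 0` plays the role of the right boundary, as does
-- `jacobiEntry lam (N + 2) = 0`.
local notation "z" => extend Fin.val ζ 0

lemma eigen_row_zero (heig : jacobiMat lam *ᵥ ζ = σ • ζ) :
    jacobiEntry lam 0 * z 1 = σ * z 0 := by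
  have := congrFun heig 0
  rw [jacobiMat_mulVec_zero] at this
  simpa [extend_val_of_lt ζ (show 0 < N + 3 by omega)] using this

lemma eigen_row_succ (heig : jacobiMat lam *ᵥ ζ = σ • ζ) (p : Fin (N + 2)) :
    jacobiEntry lam (p + 1) * z (p + 2) + jacobiEntry lam p * z p = σ * z (p + 1) := by
  have := congrFun heig p.succ
  rw [jacobiMat_mulVec_succ] at this
  rw [extend_val_of_lt ζ (show (p : ℕ) + 1 < N + 3 by omega)]
  exact this

lemma jacobiRatio_succ_eq_sqrt (j : Fin (N + 1)) :
    jacobiRatio (jacobiEntry lam) σ z (j + 1) =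
      (Real.sqrt (lam j.succ))⁻¹ * σ⁻¹ * (ζ j.succ.succ / ζ j.succ.castSucc) := by
  rw [jacobiRatio, show (j : ℕ) + 1 = j.succ from rfl, jacobiEntry_val,
    show (j.succ : ℕ) + 1 = j.succ.succ from rfl, Fin.val_injective.extend_apply,
    show ((j.succ : Fin (N + 2)) : ℕ) = j.succ.castSucc from rfl, Fin.val_injective.extend_apply]
  ring

lemma rfmExt_one_eq_jacobiRatio (heig : jacobiMat lam *ᵥ ζ = σ • ζ) (hσ : σ ≠ 0)
    (hζ : ∀ k, ζ k ≠ 0) {e : Fin (N + 1) → ℝ}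
    (he : ∀ j : Fin (N + 1), e j = jacobiRatio (jacobiEntry lam) σ z (j + 1)) (k : Fin (N + 3)) :
    rfmExt 1 e k = jacobiRatio (jacobiEntry lam) σ z k := by
  induction k using Fin.cases with
  | zero =>
    rw [rfmExt_zero, Fin.val_zero, jacobiRatio_zero hσ _ (eigen_row_zero heig)]
    rw [extend_val_of_lt ζ (by omega)]
    exact hζ 0
  | succ i =>
    induction i using Fin.lastCases with
    | last =>
      rw [Fin.succ_last, rfmExt_last, jacobiRatio, jacobiEntry_of_le lam (by simp), zero_mul,
        zero_div]
    | cast j => rw [rfmExt_succ_castSucc, he]; rfl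

lemma rfmFlow_eq_inv_sq (hlam : ∀ j, 0 < lam j) (heig : jacobiMat lam *ᵥ ζ = σ • ζ) (hσ : σ ≠ 0)
    (hζ : ∀ k, ζ k ≠ 0) {e : Fin (N + 1) → ℝ}
    (he : ∀ j : Fin (N + 1), e j = jacobiRatio (jacobiEntry lam) σ z (j + 1)) (j : Fin (N + 2)) :
    rfmFlow lam 1 e j = (σ ^ 2)⁻¹ := by
  have hz : ∀ k : Fin (N + 3), z k ≠ 0 := fun k => by
    rw [Fin.val_injective.extend_apply]; exact hζ k
  rw [rfmFlow, mul_assoc, rfmExt_one_eq_jacobiRatio heig hσ hζ he,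
    rfmExt_one_eq_jacobiRatio heig hσ hζ he, Fin.val_castSucc, Fin.val_succ,
    jacobiRatio_mul_one_sub_succ (k := j) hσ (hz j.castSucc) (hz j.succ) (eigen_row_succ heig j),
    mul_div_assoc', mul_jacobiEntry_sq lam (hlam j), one_div]

lemma jacobiRatio_succ_mem_Ioo (hlam : ∀ j, 0 < lam j) (heig : jacobiMat lam *ᵥ ζ = σ • ζ)
    (hσ : 0 < σ) (hζ : ∀ k, 0 < ζ k) (j : Fin (N + 1)) :
    jacobiRatio (jacobiEntry lam) σ z (j + 1) ∈ Set.Ioo 0 1 := by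
  have hz : ∀ k : Fin (N + 3), 0 < z k := fun k => by
    rw [Fin.val_injective.extend_apply]; exact hζ k
  have ha : ∀ k : Fin (N + 2), 0 < jacobiEntry lam k := fun k => jacobiEntry_pos lam (hlam k)
  constructor
  · exact div_pos (mul_pos (ha j.succ) (hz j.succ.succ)) (mul_pos hσ (hz j.succ.castSucc))
  · rw [← sub_pos, one_sub_jacobiRatio_succ hσ.ne' (hz j.succ.castSucc).ne'
      (eigen_row_succ heig j.castSucc)]
    exact div_pos (mul_pos (ha j.castSucc) (hz j.castSucc.castSucc))
      (mul_pos hσ (hz j.succ.castSucc))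

end SpectralSteadyState

/-- If `σ > 0` and `ζ` is a positive vector with `A(λ) ζ = σ ζ`,
then `e_i := λ_i^{-1/2} σ^{-1} ζ_{i+2} / ζ_{i+1}` lies in `(0,1)^n`, satisfies the
RFM steady-state equations, and the production rate is `λ_n e_n = σ^{-2}`. -/
theorem spectral_representation_gives_steady_state
    (N : ℕ) (lam : Fin (N + 2) → ℝ) (hlam : ∀ j, 0 < lam j)
    (σ : ℝ) (hσ : 0 < σ)
    (ζ : Fin (N + 3) → ℝ) (hζ : ∀ k, 0 < ζ k)
    (heig : (jacobiMat lam).mulVec ζ = σ • ζ)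
    (e : Fin (N + 1) → ℝ)
    (he : ∀ j : Fin (N + 1),
      e j = (Real.sqrt (lam j.succ))⁻¹ * σ⁻¹ * (ζ j.succ.succ / ζ j.succ.castSucc)) :
    (∀ j, e j ∈ Set.Ioo (0 : ℝ) 1) ∧ rfmSS lam 1 e ∧
      lam (Fin.last (N + 1)) * e (Fin.last N) = (σ ^ 2)⁻¹ := by
  have he' : ∀ j, e j = jacobiRatio (jacobiEntry lam) σ (extend Fin.val ζ 0) (j + 1) :=
    fun j => (he j).trans (jacobiRatio_succ_eq_sqrt j).symm
  have hζ0 : ∀ k, ζ k ≠ 0 := fun k => (hζ k).ne'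
  refine ⟨fun j => he' j ▸ jacobiRatio_succ_mem_Ioo hlam heig hσ hζ j, fun j => ?_, ?_⟩
  · rw [rfmFlow_eq_inv_sq hlam heig hσ.ne' hζ0 he', rfmFlow_eq_inv_sq hlam heig hσ.ne' hζ0 he']
  · rw [← rfmFlow_last, rfmFlow_eq_inv_sq hlam heig hσ.ne' hζ0 he']
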